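/- Let X, Y be independent distributions on G^t and Z the interleaved product X_1 Y_1 ... X_t Y_t. Then for every irreducible representation ρ of G, |tr(Ẑ(ρ))| ≤ |G|^{2t-1} · ||X̂(ρ^{⊗t})||_2 · ||Ŷ(ρ^{⊗t})||_2, where ||·||_2 denotes the Frobenius (entrywise L2) norm of the tensor Fourier coefficient. -/

import Mathlib

/-!
Expanding the trace of `ρ̄(x₁y₁⋯xₜyₜ)` entrywise gives a cyclic sum over index tuples
`a, b : Fin t → Fin m`, so `|G| · tr Ẑ(ρ) = ∑_{a,b} X̃(a, b) Ỹ(b, a ∘ σ)`, where `X̃, Ỹ` are the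
unnormalised entries of the tensor Fourier coefficients and `σ` is the cyclic shift of `Fin t`.
Since `a ↦ a ∘ σ` permutes the index tuples, Cauchy–Schwarz bounds the right-hand side by the
product of the Frobenius norms of `X̃` and `Ỹ`; the powers of `|G|` are the normalisations.
-/

open Finset

theorem Fin.sum_univ_fun_succ {β M : Type*} [Fintype β] [AddCommMonoid M] {k : ℕ}
    (f : (Fin (k + 1) → β) → M) :
    ∑ a, f a = ∑ x, ∑ a : Fin k → β, f (Fin.cons x a) := by
  rw [← (Fin.consEquiv fun _ => β).sum_comp, Fintype.sum_prod_type]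
  rfl

namespace Matrix

variable {n R : Type*} [Fintype n] [DecidableEq n] [CommSemiring R]

-- The summand is the weight of the path `i, a 0, …, a (k - 1), j`.
theorem list_prod_ofFn_apply : ∀ {k : ℕ} (A : Fin (k + 1) → Matrix n n R) (i j : n),
    (List.ofFn A).prod i j =
      ∑ a : Fin k → n, ∏ l, A l ((Fin.cons i a : Fin (k + 1) → n) l)
        ((Fin.snoc a j : Fin (k + 1) → n) l)
  | 0, A, i, j => by simp [Fin.snoc]
  | k + 1, A, i, j => by
    rw [List.ofFn_succ, List.prod_cons, mul_apply, Fin.sum_univ_fun_succ]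
    refine sum_congr rfl fun x _ => ?_
    simp only [list_prod_ofFn_apply, mul_sum, ← Fin.cons_snoc_eq_snoc_cons]
    simp only [Fin.prod_univ_succ (n := k + 1), Fin.cons_zero, Fin.cons_succ]

theorem trace_list_prod_ofFn {t : ℕ} [NeZero t] (A : Fin t → Matrix n n R) :
    trace (List.ofFn A).prod = ∑ a : Fin t → n, ∏ l, A l (a l) (a (finRotate t l)) := by
  obtain ⟨k, rfl⟩ := Nat.exists_eq_add_one_of_ne_zero (NeZero.ne t)
  rw [trace, Fin.sum_univ_fun_succ]
  refine sum_congr rfl fun i _ => ?_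
  rw [diag_apply, list_prod_ofFn_apply]
  simp only [Fin.snoc_eq_cons_rotate]

theorem trace_list_prod_ofFn_mul {t : ℕ} [NeZero t] (M N : Fin t → Matrix n n R) :
    trace (List.ofFn fun l => M l * N l).prod =
      ∑ a : Fin t → n, ∑ b : Fin t → n,
        (∏ l, M l (a l) (b l)) * ∏ l, N l (b l) (a (finRotate t l)) := by
  simp only [trace_list_prod_ofFn, mul_apply, Fintype.prod_sum, ← prod_mul_distrib]

end Matrix

open Matrix

theorem sum_pushforward_mul {α β γ M : Type*} [Fintype α] [Fintype β] [Fintype γ] [DecidableEq γ]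
    [NonUnitalNonAssocSemiring M] (P : α → β → γ) (c : α → β → M) (W : γ → M) :
    ∑ g, (∑ x, ∑ y, if P x y = g then c x y else 0) * W g = ∑ x, ∑ y, c x y * W (P x y) := by
  simp only [sum_mul, ite_mul, zero_mul]
  rw [sum_comm]
  refine sum_congr rfl fun x _ => ?_
  rw [sum_comm]
  simp only [sum_ite_eq, mem_univ, if_true]

theorem sum_mul_trace_list_prod_ofFn_mul {G R n : Type*} [Group G] [Fintype G] [CommSemiring R]
    [Fintype n] [DecidableEq n] {t : ℕ} [NeZero t]
    (ρ : G →* Matrix n n R) (X Y : (Fin t → G) → R) :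
    ∑ x, ∑ y, X x * Y y * trace (ρ (List.ofFn fun k => x k * y k).prod) =
      ∑ a : Fin t → n, ∑ b : Fin t → n, (∑ x, X x * ∏ k, ρ (x k) (a k) (b k)) *
        ∑ y, Y y * ∏ k, ρ (y k) (b k) (a (finRotate t k)) := by
  simp only [map_list_prod, List.map_ofFn, Function.comp_def, map_mul,
    trace_list_prod_ofFn_mul, sum_mul_sum]
  -- merging only the `(a, b)` and the `(x, y)` sums leaves a single exchange of summation
  simp only [mul_sum, ← Fintype.sum_prod_type' (α₁ := Fin t → n) (α₂ := Fin t → n),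
    ← Fintype.sum_prod_type' (α₁ := Fin t → G) (α₂ := Fin t → G)]
  rw [sum_comm]
  exact sum_congr rfl fun _ _ => sum_congr rfl fun _ _ => by ring

theorem norm_sum_mul_le_sqrt_mul_sqrt {ι 𝕜 : Type*} [SeminormedRing 𝕜] (s : Finset ι)
    (f g : ι → 𝕜) :
    ‖∑ i ∈ s, f i * g i‖ ≤ √(∑ i ∈ s, ‖f i‖ ^ 2) * √(∑ i ∈ s, ‖g i‖ ^ 2) :=
  calc ‖∑ i ∈ s, f i * g i‖ ≤ ∑ i ∈ s, ‖f i‖ * ‖g i‖ :=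
        (norm_sum_le _ _).trans (sum_le_sum fun _ _ => norm_mul_le _ _)
    _ ≤ _ := Real.sum_mul_le_sqrt_mul_sqrt s _ _

theorem norm_sum_sum_mul_le {α β 𝕜 : Type*} [Fintype α] [Fintype β] [SeminormedRing 𝕜]
    (e : α ≃ α) (S : α → β → 𝕜) (T : β → α → 𝕜) :
    ‖∑ a, ∑ b, S a b * T b (e a)‖ ≤
      √(∑ a, ∑ b, ‖S a b‖ ^ 2) * √(∑ b, ∑ a, ‖T b a‖ ^ 2) := by
  have hT : ∑ b, ∑ a, ‖T b a‖ ^ 2 = ∑ p : α × β, ‖T p.2 (e p.1)‖ ^ 2 := by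
    symm
    rw [Fintype.sum_prod_type, sum_comm]
    exact sum_congr rfl fun b _ => e.sum_comp fun a => ‖T b a‖ ^ 2
  rw [hT, ← Fintype.sum_prod_type', ← Fintype.sum_prod_type' (fun a b => ‖S a b‖ ^ 2)]
  exact norm_sum_mul_le_sqrt_mul_sqrt _ _ _

theorem sqrt_sum_sum_norm_mul_sq {α β 𝕜 : Type*} [Fintype α] [Fintype β] [NormedDivisionRing 𝕜]
    (c : 𝕜) (S : α → β → 𝕜) :
    √(∑ a, ∑ b, ‖c * S a b‖ ^ 2) = ‖c‖ * √(∑ a, ∑ b, ‖S a b‖ ^ 2) := by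
  simp only [norm_mul, mul_pow, ← mul_sum]
  rw [Real.sqrt_mul (sq_nonneg _), Real.sqrt_sq (norm_nonneg _)]

theorem trace_fourier_interleaved_bound_general {G : Type*} [Group G] [Fintype G] [DecidableEq G]
    (t : ℕ) (ht : 0 < t)
    (X Y : (Fin t → G) → ℝ)
    (Z : G → ℝ)
    (hZ : ∀ g : G, Z g = ∑ x : Fin t → G, ∑ y : Fin t → G,
        if (List.ofFn fun k => x k * y k).prod = g then X x * Y y else 0)
    (m : ℕ) (ρ : G →* Matrix (Fin m) (Fin m) ℂ) :
    ‖Matrix.trace ((Fintype.card G : ℂ)⁻¹ •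
        ∑ g : G, (Z g : ℂ) • (ρ g).map (starRingEnd ℂ))‖ ≤
    (Fintype.card G : ℝ) ^ (2 * t - 1) *
      Real.sqrt (∑ a : Fin t → Fin m, ∑ b : Fin t → Fin m,
        ‖((Fintype.card G : ℂ) ^ t)⁻¹ * ∑ x : Fin t → G, (X x : ℂ) *
            ∏ k : Fin t, ((ρ (x k)).map (starRingEnd ℂ)) (a k) (b k)‖ ^ 2) *
      Real.sqrt (∑ a : Fin t → Fin m, ∑ b : Fin t → Fin m,
        ‖((Fintype.card G : ℂ) ^ t)⁻¹ * ∑ y : Fin t → G, (Y y : ℂ) *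
            ∏ k : Fin t, ((ρ (y k)).map (starRingEnd ℂ)) (a k) (b k)‖ ^ 2) := by
  have : NeZero t := ⟨ht.ne'⟩
  let φ : G →* Matrix (Fin m) (Fin m) ℂ := (starRingEnd ℂ).mapMatrix.toMonoidHom.comp ρ
  have hφ : ∀ g, (ρ g).map (starRingEnd ℂ) = φ g := fun _ => rfl
  have hZφ : ∑ g, (Z g : ℂ) * trace (φ g) =
      ∑ x, ∑ y, (X x : ℂ) * Y y * trace (φ (List.ofFn fun k => x k * y k).prod) := by
    simp only [hZ, Complex.ofReal_sum, apply_ite ((↑) : ℝ → ℂ), Complex.ofReal_mul,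
      Complex.ofReal_zero]
    exact sum_pushforward_mul _ _ _
  have hcard : (Fintype.card G : ℝ)⁻¹ = (Fintype.card G : ℝ) ^ (2 * t - 1) *
      ((Fintype.card G : ℝ) ^ t)⁻¹ * ((Fintype.card G : ℝ) ^ t)⁻¹ := by
    have hG : (Fintype.card G : ℝ) ≠ 0 := by positivity
    rw [pow_sub₀ _ hG (by omega), two_mul, pow_add]
    field_simp
  simp only [hφ, trace_smul, trace_sum, smul_eq_mul]
  rw [hZφ, sum_mul_trace_list_prod_ofFn_mul, norm_mul, sqrt_sum_sum_norm_mul_sq,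
    sqrt_sum_sum_norm_mul_sq]
  -- `(finRotate t).symm.arrowCongr (Equiv.refl _)` is `a ↦ a ∘ finRotate t`
  have hCS := norm_sum_sum_mul_le ((finRotate t).symm.arrowCongr (Equiv.refl (Fin m)))
    (fun a b : Fin t → Fin m => ∑ x, (X x : ℂ) * ∏ k, φ (x k) (a k) (b k))
    (fun b a : Fin t → Fin m => ∑ y, (Y y : ℂ) * ∏ k, φ (y k) (b k) (a k))
  refine (mul_le_mul_of_nonneg_left hCS (norm_nonneg _)).trans (le_of_eq ?_)
  simp only [norm_inv, norm_pow, Complex.norm_natCast]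
  rw [hcard]
  ring

/-- Main claim (inequality (2)): for the interleaved product `Z = X₁Y₁⋯XₜYₜ`,
`|tr Ẑ(ρ)| ≤ |G|^{2t-1} ‖X̂(ρ^{⊗t})‖₂ ‖Ŷ(ρ^{⊗t})‖₂` in the Frobenius norm. -/
theorem trace_fourier_interleaved_bound {G : Type*} [Group G] [Fintype G] [DecidableEq G]
    (t : ℕ) (ht : 0 < t)
    (X Y : (Fin t → G) → ℝ)
    (hX0 : ∀ x, 0 ≤ X x) (hX1 : ∑ x : Fin t → G, X x = 1)
    (hY0 : ∀ y, 0 ≤ Y y) (hY1 : ∑ y : Fin t → G, Y y = 1)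
    (Z : G → ℝ)
    (hZ : ∀ g : G, Z g = ∑ x : Fin t → G, ∑ y : Fin t → G,
        if (List.ofFn fun k => x k * y k).prod = g then X x * Y y else 0)
    (m : ℕ) (ρ : G →* Matrix (Fin m) (Fin m) ℂ)
    (hirr : ∀ M : Matrix (Fin m) (Fin m) ℂ, (∀ g : G, M * ρ g = ρ g * M) →
      ∃ c : ℂ, M = c • (1 : Matrix (Fin m) (Fin m) ℂ)) :
    ‖Matrix.trace ((Fintype.card G : ℂ)⁻¹ •
        ∑ g : G, (Z g : ℂ) • (ρ g).map (starRingEnd ℂ))‖ ≤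
    (Fintype.card G : ℝ) ^ (2 * t - 1) *
      Real.sqrt (∑ a : Fin t → Fin m, ∑ b : Fin t → Fin m,
        ‖((Fintype.card G : ℂ) ^ t)⁻¹ * ∑ x : Fin t → G, (X x : ℂ) *
            ∏ k : Fin t, ((ρ (x k)).map (starRingEnd ℂ)) (a k) (b k)‖ ^ 2) *
      Real.sqrt (∑ a : Fin t → Fin m, ∑ b : Fin t → Fin m,
        ‖((Fintype.card G : ℂ) ^ t)⁻¹ * ∑ y : Fin t → G, (Y y : ℂ) *
            ∏ k : Fin t, ((ρ (y k)).map (starRingEnd ℂ)) (a k) (b k)‖ ^ 2) :=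
  trace_fourier_interleaved_bound_general t ht X Y Z hZ m ρ
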